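/- Define H(t, p, q) = G(1/(3p), p, p) + G(1/(3q), q, q) − 2·G(t, p, q). Then H(t, p, q) ≥ 0 for all t, p, q ∈ (0, ∞), and H(t, p, q) = 0 if and only if p = q and t = 1/(3p). -/

import Mathlib

open Real

/-- `S₀(t) = 8t³/(1+t²)³`, the spherical candle function in the variable `t = tan(ℓ/2)`. -/
noncomputable def sphS0 (t : ℝ) : ℝ := 8 * t ^ 3 / (1 + t ^ 2) ^ 3

/-- `S₋₁(t) = 4t⁴(3+t²)/(3(1+t²)³)`. -/
noncomputable def sphSm1 (t : ℝ) : ℝ := 4 * t ^ 4 * (3 + t ^ 2) / (3 * (1 + t ^ 2) ^ 3)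

/-- `S₋₂(t) = (4/3)·arctan t − (4/3)·t/(1+t²) − (8/9)·t³/(1+t²)³`. -/
noncomputable def sphSm2 (t : ℝ) : ℝ :=
  (4 / 3) * arctan t - (4 / 3) * t / (1 + t ^ 2) - (8 / 9) * t ^ 3 / (1 + t ^ 2) ^ 3

/-- `G(t, p, q) = (8/3)·arctan t − pq·S₀(t) − (p+q)·S₋₁(t) − S₋₂(t)`. -/
noncomputable def sphGt (t p q : ℝ) : ℝ :=
  (8 / 3) * arctan t - p * q * sphS0 t - (p + q) * sphSm1 t - sphSm2 t

/-- `H(t, p, q) = G(1/(3p), p, p) + G(1/(3q), q, q) − 2·G(t, p, q)`. -/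
noncomputable def sphH (t p q : ℝ) : ℝ :=
  sphGt (1 / (3 * p)) p p + sphGt (1 / (3 * q)) q q - 2 * sphGt t p q

/-!
Put `s = 1/t`. Then `H(t, p, q) = (4/9)·[D(s, 3p) + D(s, 3q) + (S₀(s)/2)(3p − s)(3q − s)]`,
where `D(s, w) = F(w) − F(s) − F'(s)(w − s)` is the Bregman divergence of
`F(x) = x/(1+x²) − 3 arctan x`, a second primitive of `S₀`; since `S₀ > 0` on `(0, ∞)`, `F` is
strictly convex there. If `3p − s` and `3q − s` have the same sign, every term is nonnegative and
the sum vanishes only at `3p = 3q = s`. In the mixed case `u = s + a > s > v = s − b`, comparing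
derivatives gives the rational minorants `D(s, s + a) ≥ (S₀(s)/2)·a²/(1 + αa)` and
`D(s, s − b) ≥ (S₀(s)/2)·b²/(1 + βb)`, with `α = sphRateRight s` and `β = sphRateLeft s`. These
reduce the claim to `ab < a²/(1 + αa) + b²/(1 + βb)`, a quadratic inequality in `a`.
-/

open Set

lemma sub_le_sub_of_hasDerivAt_le {f g f' g' : ℝ → ℝ} {a b : ℝ} (hab : a ≤ b)
    (hf : ∀ x ∈ Icc a b, HasDerivAt f (f' x) x) (hg : ∀ x ∈ Icc a b, HasDerivAt g (g' x) x)
    (h : ∀ x ∈ Ioo a b, f' x ≤ g' x) : f b - f a ≤ g b - g a := by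
  have hmono : MonotoneOn (fun x => g x - f x) (Icc a b) := by
    refine monotoneOn_of_hasDerivWithinAt_nonneg (f' := fun x => g' x - f' x) (convex_Icc a b)
      (fun x hx => ((hg x hx).sub (hf x hx)).continuousAt.continuousWithinAt)
      (fun x hx => ?_) (fun x hx => sub_nonneg.2 (h x (by simpa using hx)))
    rw [interior_Icc] at hx
    exact ((hg x (Ioo_subset_Icc_self hx)).sub (hf x (Ioo_subset_Icc_self hx))).hasDerivWithinAt
  have := hmono (left_mem_Icc.2 hab) (right_mem_Icc.2 hab) hab
  linarith

lemma hasDerivAt_mul_sq_div (K α x : ℝ) (h : 1 + α * x ≠ 0) :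
    HasDerivAt (fun x => K * x ^ 2 / (1 + α * x)) (K * x * (2 + α * x) / (1 + α * x) ^ 2) x := by
  have hnum : HasDerivAt (fun y : ℝ => K * y ^ 2) (K * (2 * x)) x :=
    ((hasDerivAt_pow 2 x).const_mul K).congr_deriv (by ring)
  have hden : HasDerivAt (fun y : ℝ => 1 + α * y) α x :=
    (((hasDerivAt_id' x).const_mul α).const_add 1).congr_deriv (by ring)
  refine (hnum.div hden h).congr_deriv ?_
  field_simp; ring

lemma mul_lt_sq_div_add_sq_div {α β a b : ℝ} (hα : 0 ≤ α) (hβ : 0 ≤ β) (ha : 0 < a)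
    (hb : 0 < b) (hαb : α * b < 1) (hdisc : (α + β) ^ 2 * b ^ 2 < 3 + 2 * (β - α) * b) :
    a * b < a ^ 2 / (1 + α * a) + b ^ 2 / (1 + β * b) := by
  have hαa : 0 < 1 + α * a := by positivity
  have hβb : 0 < 1 + β * b := by positivity
  rw [div_add_div _ _ hαa.ne' hβb.ne', lt_div_iff₀ (mul_pos hαa hβb)]
  set A := (1 + β * b) * (1 - α * b)
  set B := 1 + (β - α) * b
  set D := a ^ 2 * (1 + β * b) + (1 + α * a) * b ^ 2 - a * b * ((1 + α * a) * (1 + β * b))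
  have hA : 0 < A := mul_pos hβb (by linarith)
  -- completing the square in `a`
  have key : 4 * A * D
      = (2 * A * a - B * b) ^ 2 + b ^ 2 * (3 + 2 * (β - α) * b - (α + β) ^ 2 * b ^ 2) := by
    ring
  have : 0 < 4 * A * D := by
    rw [key]
    exact add_pos_of_nonneg_of_pos (sq_nonneg _) (mul_pos (pow_pos hb 2) (sub_pos.2 hdisc))
  linarith [pos_of_mul_pos_right this (by positivity)]

lemma sphS0_pos {x : ℝ} (hx : 0 < x) : 0 < sphS0 x := by unfold sphS0; positivity

noncomputable def sphS0Antideriv (x : ℝ) : ℝ := -(2 + 4 * x ^ 2) / (1 + x ^ 2) ^ 2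

noncomputable def sphS0Antideriv2 (x : ℝ) : ℝ := x / (1 + x ^ 2) - 3 * arctan x

lemma hasDerivAt_sphS0Antideriv (x : ℝ) : HasDerivAt sphS0Antideriv (sphS0 x) x := by
  have hnum : HasDerivAt (fun y : ℝ => -(2 + 4 * y ^ 2)) (-(8 * x)) x :=
    ((((hasDerivAt_pow 2 x).const_mul 4).const_add 2).neg).congr_deriv (by ring)
  have hden : HasDerivAt (fun y : ℝ => (1 + y ^ 2) ^ 2) (4 * x * (1 + x ^ 2)) x :=
    (((hasDerivAt_pow 2 x).const_add 1).pow 2).congr_deriv (by ring)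
  refine (hnum.div hden (by positivity)).congr_deriv ?_
  unfold sphS0; field_simp; ring

lemma hasDerivAt_sphS0Antideriv2 (x : ℝ) : HasDerivAt sphS0Antideriv2 (sphS0Antideriv x) x := by
  have hden : HasDerivAt (fun y : ℝ => 1 + y ^ 2) (2 * x) x := by
    simpa using (hasDerivAt_pow 2 x).const_add 1
  refine (((hasDerivAt_id' x).div hden (by positivity)).sub
    ((hasDerivAt_arctan x).const_mul 3)).congr_deriv ?_
  unfold sphS0Antideriv; field_simp; ring

lemma strictMonoOn_sphS0Antideriv : StrictMonoOn sphS0Antideriv (Ici 0) :=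
  strictMonoOn_of_hasDerivWithinAt_pos (convex_Ici 0)
    (fun x _ => (hasDerivAt_sphS0Antideriv x).continuousAt.continuousWithinAt)
    (fun x _ => (hasDerivAt_sphS0Antideriv x).hasDerivWithinAt)
    (fun x hx => sphS0_pos (by simpa using hx))

noncomputable def sphBregman (s w : ℝ) : ℝ :=
  sphS0Antideriv2 w - sphS0Antideriv2 s - sphS0Antideriv s * (w - s)

@[simp] lemma sphBregman_self (s : ℝ) : sphBregman s s = 0 := by simp [sphBregman]

lemma hasDerivAt_sphBregman (s w : ℝ) :
    HasDerivAt (sphBregman s) (sphS0Antideriv w - sphS0Antideriv s) w :=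
  (((hasDerivAt_sphS0Antideriv2 w).sub_const (sphS0Antideriv2 s)).sub
    (((hasDerivAt_id' w).sub_const s).const_mul (sphS0Antideriv s))).congr_deriv (by ring)

lemma sphBregman_pos {s w : ℝ} (hs : 0 ≤ s) (hw : 0 ≤ w) (hne : w ≠ s) : 0 < sphBregman s w := by
  have hcont : Continuous (sphBregman s) :=
    continuous_iff_continuousAt.2 fun x => (hasDerivAt_sphBregman s x).continuousAt
  rcases hne.lt_or_gt with hws | hsw
  · have hanti : StrictAntiOn (sphBregman s) (Icc w s) := by
      refine strictAntiOn_of_hasDerivWithinAt_neg (convex_Icc w s) hcont.continuousOn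
        (fun x _ => (hasDerivAt_sphBregman s x).hasDerivWithinAt) fun x hx => ?_
      rw [interior_Icc] at hx
      exact sub_neg.2 (strictMonoOn_sphS0Antideriv (hw.trans hx.1.le) hs hx.2)
    simpa using hanti (left_mem_Icc.2 hws.le) (right_mem_Icc.2 hws.le) hws
  · have hmono : StrictMonoOn (sphBregman s) (Icc s w) := by
      refine strictMonoOn_of_hasDerivWithinAt_pos (convex_Icc s w) hcont.continuousOn
        (fun x _ => (hasDerivAt_sphBregman s x).hasDerivWithinAt) fun x hx => ?_
      rw [interior_Icc] at hx
      exact sub_pos.2 (strictMonoOn_sphS0Antideriv hs (hs.trans hx.1.le) hx.1)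
    simpa using hmono (left_mem_Icc.2 hsw.le) (right_mem_Icc.2 hsw.le) hsw

lemma sphBregman_nonneg {s w : ℝ} (hs : 0 ≤ s) (hw : 0 ≤ w) : 0 ≤ sphBregman s w := by
  rcases eq_or_ne w s with rfl | hne
  · simp
  · exact (sphBregman_pos hs hw hne).le

noncomputable def sphRateRight (s : ℝ) : ℝ := 2 * s ^ 3 / ((1 + s ^ 2) * (1 + 2 * s ^ 2))

noncomputable def sphRateLeft (s : ℝ) : ℝ := 2 / (s * (1 + s ^ 2))

lemma sphRateRight_nonneg {s : ℝ} (hs : 0 ≤ s) : 0 ≤ sphRateRight s := by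
  unfold sphRateRight; positivity

lemma sphRateLeft_nonneg {s : ℝ} (hs : 0 ≤ s) : 0 ≤ sphRateLeft s := by
  unfold sphRateLeft; positivity

lemma sphRateRight_mul_lt_one {s b : ℝ} (hs : 0 ≤ s) (hbs : b ≤ s) : sphRateRight s * b < 1 := by
  calc sphRateRight s * b ≤ sphRateRight s * s := by
        gcongr; exact sphRateRight_nonneg hs
    _ = 2 * s ^ 4 / (2 * s ^ 4 + 3 * s ^ 2 + 1) := by unfold sphRateRight; field_simp; ring
    _ < 1 := by rw [div_lt_one (by positivity)]; nlinarith [sq_nonneg s]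

lemma sq_sphRate_add_mul_sq_lt {s b : ℝ} (hs : 0 < s) (hb : 0 < b) (hbs : b ≤ s) :
    (sphRateRight s + sphRateLeft s) ^ 2 * b ^ 2 <
      3 + 2 * (sphRateLeft s - sphRateRight s) * b := by
  have hsum : sphRateRight s + sphRateLeft s = 2 * (1 + s ^ 2) / (s * (1 + 2 * s ^ 2)) := by
    unfold sphRateRight sphRateLeft; field_simp; ring
  have hdiff : sphRateLeft s - sphRateRight s =
      2 * (1 + 2 * s ^ 2 - s ^ 4) / (s * (1 + s ^ 2) * (1 + 2 * s ^ 2)) := by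
    unfold sphRateRight sphRateLeft; field_simp
  rw [hsum, hdiff, div_pow, ← sub_pos]
  have key : 3 + 2 * (2 * (1 + 2 * s ^ 2 - s ^ 4) / (s * (1 + s ^ 2) * (1 + 2 * s ^ 2))) * b -
      (2 * (1 + s ^ 2)) ^ 2 / (s * (1 + 2 * s ^ 2)) ^ 2 * b ^ 2 =
      (3 * (1 + s ^ 2) * (1 + 2 * s ^ 2) ^ 2 * s * (s - b) +
        s * b * (3 + 19 * s ^ 2 + 24 * s ^ 4) + 4 * (1 + s ^ 2) ^ 3 * b * (s - b)) /
      (s ^ 2 * (1 + s ^ 2) * (1 + 2 * s ^ 2) ^ 2) := by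
    field_simp; ring
  have hsb : 0 ≤ s - b := sub_nonneg.2 hbs
  rw [key]
  positivity

lemma sphS0Antideriv_add_sub_ge {s a : ℝ} (hs : 0 ≤ s) (ha : 0 ≤ a) :
    sphS0 s / 2 * a * (2 + sphRateRight s * a) / (1 + sphRateRight s * a) ^ 2
      ≤ sphS0Antideriv (s + a) - sphS0Antideriv s := by
  have key : sphS0Antideriv (s + a) - sphS0Antideriv s -
      sphS0 s / 2 * a * (2 + sphRateRight s * a) / (1 + sphRateRight s * a) ^ 2 =
      2 * a ^ 2 * ((s + a) ^ 2 + 2 * s * (s + a) + 3 * s ^ 2 + 8 * s ^ 2 * (s + a) ^ 2 +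
        8 * s ^ 3 * (s + a) + 14 * s ^ 4 + 25 * s ^ 4 * (s + a) ^ 2 + 10 * s ^ 5 * (s + a) +
        19 * s ^ 6 + 30 * s ^ 6 * (s + a) ^ 2 + 4 * s ^ 7 * (s + a) + 8 * s ^ 8 +
        12 * s ^ 8 * (s + a) ^ 2) /
      ((1 + (s + a) ^ 2) ^ 2 * (1 + s ^ 2) ^ 2 * (2 * s ^ 3 * (s + a) + 3 * s ^ 2 + 1) ^ 2) := by
    unfold sphS0Antideriv sphS0 sphRateRight
    field_simp
    ring
  have : 0 ≤ sphS0Antideriv (s + a) - sphS0Antideriv s -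
      sphS0 s / 2 * a * (2 + sphRateRight s * a) / (1 + sphRateRight s * a) ^ 2 := by
    rw [key]; positivity
  linarith

lemma sphS0Antideriv_sub_sub_le {s b : ℝ} (hs : 0 < s) (hb : 0 ≤ b) (hbs : b ≤ s) :
    sphS0Antideriv (s - b) - sphS0Antideriv s ≤
      -(sphS0 s / 2 * b * (2 + sphRateLeft s * b) / (1 + sphRateLeft s * b) ^ 2) := by
  have key : sphS0Antideriv (s - b) - sphS0Antideriv s +
      sphS0 s / 2 * b * (2 + sphRateLeft s * b) / (1 + sphRateLeft s * b) ^ 2 =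
      -(2 * b ^ 2 *
        (4 * (s - b) ^ 3 * (1 + s ^ 2) ^ 2 * (s ^ 3 + b) + 3 * s ^ 2 * (s - b) ^ 2 +
          2 * s ^ 3 * (s - b) + s ^ 4 + 8 * s ^ 4 * (s - b) ^ 2 + 4 * s ^ 5 * (s - b) + 2 * s ^ 6 +
          7 * s ^ 6 * (s - b) ^ 2 + 2 * s ^ 7 * (s - b) + s ^ 8 + 2 * s ^ 8 * (s - b) ^ 2) /
        ((1 + (s - b) ^ 2) ^ 2 * (1 + s ^ 2) ^ 2 * (s + s ^ 3 + 2 * b) ^ 2)) := by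
    unfold sphS0Antideriv sphS0 sphRateLeft
    field_simp
    ring
  have : sphS0Antideriv (s - b) - sphS0Antideriv s +
      sphS0 s / 2 * b * (2 + sphRateLeft s * b) / (1 + sphRateLeft s * b) ^ 2 ≤ 0 := by
    rw [key, neg_nonpos]
    have hx : 0 ≤ s - b := sub_nonneg.2 hbs
    generalize s - b = x at hx ⊢
    positivity
  linarith

lemma sphS0_mul_sq_div_le_sphBregman_add {s a : ℝ} (hs : 0 ≤ s) (ha : 0 ≤ a) :
    sphS0 s / 2 * a ^ 2 / (1 + sphRateRight s * a) ≤ sphBregman s (s + a) := by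
  have hα := sphRateRight_nonneg hs
  have := sub_le_sub_of_hasDerivAt_le ha
    (fun y hy => hasDerivAt_mul_sq_div (sphS0 s / 2) (sphRateRight s) y (by nlinarith [hy.1]))
    (fun y _ => (hasDerivAt_sphBregman s (s + y)).comp_const_add s y)
    (fun y hy => sphS0Antideriv_add_sub_ge hs hy.1.le)
  simpa using this

lemma sphS0_mul_sq_div_le_sphBregman_sub {s b : ℝ} (hs : 0 < s) (hb : 0 ≤ b) (hbs : b ≤ s) :
    sphS0 s / 2 * b ^ 2 / (1 + sphRateLeft s * b) ≤ sphBregman s (s - b) := by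
  have hβ := sphRateLeft_nonneg hs.le
  have := sub_le_sub_of_hasDerivAt_le hb
    (fun y hy => hasDerivAt_mul_sq_div (sphS0 s / 2) (sphRateLeft s) y (by nlinarith [hy.1]))
    (fun y _ => (hasDerivAt_sphBregman s (s - y)).comp_const_sub s y)
    (fun y hy => le_neg_of_le_neg (sphS0Antideriv_sub_sub_le hs hy.1.le (hy.2.le.trans hbs)))
  simpa using this

lemma sphBregman_add_add_pos_of_lt_of_lt {s u v : ℝ} (hv : 0 < v) (hvs : v < s) (hsu : s < u) :
    0 < sphBregman s u + sphBregman s v + sphS0 s / 2 * (u - s) * (v - s) := by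
  have hs : 0 < s := hv.trans hvs
  obtain ⟨a, ha, rfl⟩ : ∃ a > 0, u = s + a := ⟨u - s, sub_pos.2 hsu, by ring⟩
  obtain ⟨b, hb, rfl⟩ : ∃ b > 0, v = s - b := ⟨s - v, sub_pos.2 hvs, by ring⟩
  have hcouple := mul_lt_sq_div_add_sq_div (sphRateRight_nonneg hs.le)
    (sphRateLeft_nonneg hs.le) ha hb (sphRateRight_mul_lt_one hs.le (by linarith))
    (sq_sphRate_add_mul_sq_lt hs hb (by linarith))
  have : sphS0 s / 2 * (a * b) < sphBregman s (s + a) + sphBregman s (s - b) :=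
    calc sphS0 s / 2 * (a * b)
        < sphS0 s / 2 * (a ^ 2 / (1 + sphRateRight s * a) + b ^ 2 / (1 + sphRateLeft s * b)) :=
          mul_lt_mul_of_pos_left hcouple (half_pos (sphS0_pos hs))
      _ = sphS0 s / 2 * a ^ 2 / (1 + sphRateRight s * a) +
          sphS0 s / 2 * b ^ 2 / (1 + sphRateLeft s * b) := by ring
      _ ≤ sphBregman s (s + a) + sphBregman s (s - b) :=
          add_le_add (sphS0_mul_sq_div_le_sphBregman_add hs.le ha.le)
            (sphS0_mul_sq_div_le_sphBregman_sub hs hb.le (by linarith))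
  linarith

lemma sphBregman_add_add_pos {s u v : ℝ} (hs : 0 < s) (hu : 0 < u) (hv : 0 < v)
    (hne : ¬(u = s ∧ v = s)) :
    0 < sphBregman s u + sphBregman s v + sphS0 s / 2 * (u - s) * (v - s) := by
  rcases le_or_gt 0 ((u - s) * (v - s)) with hsame | hmixed
  · have hprod : 0 ≤ sphS0 s / 2 * (u - s) * (v - s) := by
      rw [mul_assoc]; exact mul_nonneg (half_pos (sphS0_pos hs)).le hsame
    have hBu := sphBregman_nonneg hs.le hu.le
    have hBv := sphBregman_nonneg hs.le hv.le
    rcases not_and_or.1 hne with hus | hvs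
    · linarith [sphBregman_pos hs.le hu.le hus]
    · linarith [sphBregman_pos hs.le hv.le hvs]
  · rcases mul_neg_iff.1 hmixed with ⟨hsu, hvs⟩ | ⟨hus, hsv⟩
    · exact sphBregman_add_add_pos_of_lt_of_lt hv (sub_neg.1 hvs) (sub_pos.1 hsu)
    · linarith [sphBregman_add_add_pos_of_lt_of_lt hu (sub_neg.1 hus) (sub_pos.1 hsv)]

lemma sphGt_one_div {s : ℝ} (hs : 0 < s) (p q : ℝ) :
    sphGt (1 / s) p q = 2 * π / 3 + 2 / 9 * (2 * sphS0Antideriv2 s +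
      sphS0Antideriv s * (3 * p + 3 * q - 2 * s) - sphS0 s / 2 * (3 * p - s) * (3 * q - s)) := by
  have harctan : arctan (1 / s) = π / 2 - arctan s := by rw [one_div, arctan_inv_of_pos hs]
  unfold sphGt sphS0 sphSm1 sphSm2 sphS0Antideriv2 sphS0Antideriv
  rw [harctan]
  field_simp
  ring

lemma sphH_eq_sphBregman {t p q : ℝ} (ht : 0 < t) (hp : 0 < p) (hq : 0 < q) :
    sphH t p q = 4 / 9 * (sphBregman (1 / t) (3 * p) + sphBregman (1 / t) (3 * q) +
      sphS0 (1 / t) / 2 * (3 * p - 1 / t) * (3 * q - 1 / t)) := by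
  have hG := sphGt_one_div (one_div_pos.2 ht) p q
  rw [one_div_one_div] at hG
  unfold sphH
  rw [sphGt_one_div (by positivity) p p, sphGt_one_div (by positivity) q q, hG]
  unfold sphBregman
  ring

/-- `H ≥ 0` on `(0, ∞)³`, with equality iff `p = q` and `t = 1/(3p)`. -/
theorem sphH_nonneg (t p q : ℝ) (ht : 0 < t) (hp : 0 < p) (hq : 0 < q) :
    0 ≤ sphH t p q ∧ (sphH t p q = 0 ↔ p = q ∧ t = 1 / (3 * p)) := by
  have hcrit : p = q ∧ t = 1 / (3 * p) ↔ 3 * p = 1 / t ∧ 3 * q = 1 / t := by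
    constructor
    · rintro ⟨rfl, rfl⟩
      simp
    · rintro ⟨hp', hq'⟩
      exact ⟨by linarith, by rw [hp', one_div_one_div]⟩
  rw [sphH_eq_sphBregman ht hp hq, hcrit]
  by_cases hs : 3 * p = 1 / t ∧ 3 * q = 1 / t
  · simp [hs]
  · have hpos := sphBregman_add_add_pos (one_div_pos.2 ht) (by positivity) (by positivity) hs
    exact ⟨by positivity, iff_of_false (by positivity) hs⟩
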